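/- Let γ be a positive integer and let G be the group presented by ⟨a,b | a^(2^(γ+1)) = b^(2^(γ+1)) = [a,b]^(2^γ) = [a,b,a] = [a,b,b] = e, a^(2^γ) = b^(2^γ) = [a,b]^(2^(γ-1))⟩ (the exceptional type). Then G is not capable; that is, there is no group K with K/Z(K) isomorphic to G. -/
import Mathlib

/-- The paper's commutator convention: `[x,y] = x⁻¹y⁻¹xy`. -/
def pcomm {G : Type*} [Group G] (x y : G) : G := x⁻¹ * y⁻¹ * x * y

/-- A group is capable if it is isomorphic to `K/Z(K)` for some group `K`. -/
def IsCapable (G : Type*) [Group G] : Prop :=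
  ∃ (K : Type) (_ : Group K), Nonempty ((K ⧸ Subgroup.center K) ≃* G)

/-- The relators of the exceptional type presentation
`⟨a,b | a^(2^(γ+1)) = b^(2^(γ+1)) = [a,b]^(2^γ) = [a,b,a] = [a,b,b] = e,
  a^(2^γ) = b^(2^γ) = [a,b]^(2^(γ-1))⟩`. -/
def relsIII (γ : ℕ) : Set (FreeGroup (Fin 2)) :=
  let a : FreeGroup (Fin 2) := FreeGroup.of 0
  let b : FreeGroup (Fin 2) := FreeGroup.of 1
  {a ^ 2 ^ (γ + 1), b ^ 2 ^ (γ + 1), pcomm a b ^ 2 ^ γ,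
    pcomm (pcomm a b) a, pcomm (pcomm a b) b,
    a ^ 2 ^ γ * (pcomm a b ^ 2 ^ (γ - 1))⁻¹,
    b ^ 2 ^ γ * (pcomm a b ^ 2 ^ (γ - 1))⁻¹}

lemma map_pcomm {G H : Type*} [Group G] [Group H] (φ : G →* H) (u v : G) :
    φ (pcomm u v) = pcomm (φ u) (φ v) := by simp [pcomm]

/-! ### A concrete model: a quotient of the integer Heisenberg group -/

@[ext] structure H3 : Type where
  x : ℤ
  y : ℤ
  z : ℤ

namespace H3

instance : Mul H3 := ⟨fun p q => ⟨p.x + q.x, p.y + q.y, p.z + q.z + p.y * q.x⟩⟩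
instance : One H3 := ⟨⟨0, 0, 0⟩⟩
instance : Inv H3 := ⟨fun p => ⟨-p.x, -p.y, -p.z + p.y * p.x⟩⟩

@[simp] lemma mul_x (p q : H3) : (p * q).x = p.x + q.x := rfl
@[simp] lemma mul_y (p q : H3) : (p * q).y = p.y + q.y := rfl
@[simp] lemma mul_z (p q : H3) : (p * q).z = p.z + q.z + p.y * q.x := rfl
@[simp] lemma one_x : (1 : H3).x = 0 := rfl
@[simp] lemma one_y : (1 : H3).y = 0 := rfl
@[simp] lemma one_z : (1 : H3).z = 0 := rfl
@[simp] lemma inv_x (p : H3) : (p⁻¹).x = -p.x := rfl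
@[simp] lemma inv_y (p : H3) : (p⁻¹).y = -p.y := rfl
@[simp] lemma inv_z (p : H3) : (p⁻¹).z = -p.z + p.y * p.x := rfl

instance : Group H3 where
  mul_assoc a b c := by ext <;> simp <;> ring
  one_mul a := by ext <;> simp
  mul_one a := by ext <;> simp
  inv_mul_cancel a := by ext <;> simp <;> ring

lemma pow_xz (a c : ℤ) (n : ℕ) : (⟨a, 0, c⟩ : H3) ^ n = ⟨n * a, 0, n * c⟩ := by
  induction n with
  | zero => ext <;> simp
  | succ n ih => rw [pow_succ, ih]; ext <;> simp <;> ring_nf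

lemma pow_yz (b c : ℤ) (n : ℕ) : (⟨0, b, c⟩ : H3) ^ n = ⟨0, n * b, n * c⟩ := by
  induction n with
  | zero => ext <;> simp
  | succ n ih => rw [pow_succ, ih]; ext <;> simp <;> ring_nf

lemma pcomm_ab : pcomm (⟨1, 0, 0⟩ : H3) (⟨0, 1, 0⟩ : H3) = ⟨0, 0, -1⟩ := by
  ext <;> simp [pcomm]

lemma pcomm_ca : pcomm (⟨0, 0, -1⟩ : H3) (⟨1, 0, 0⟩ : H3) = 1 := by
  ext <;> simp [pcomm]

lemma pcomm_cb : pcomm (⟨0, 0, -1⟩ : H3) (⟨0, 1, 0⟩ : H3) = 1 := by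
  ext <;> simp [pcomm]

/-- The subgroup of relations, for `d = 2^(γ-1)`. -/
def N (d : ℤ) : Subgroup H3 where
  carrier := {p | ∃ a b c : ℤ, p.x = a * (2 * d) ∧ p.y = b * (2 * d) ∧
    p.z = (a + b) * d + c * (2 * d)}
  one_mem' := ⟨0, 0, 0, by simp⟩
  mul_mem' := by
    rintro p q ⟨a1, b1, c1, h1, h2, h3⟩ ⟨a2, b2, c2, h4, h5, h6⟩
    exact ⟨a1 + a2, b1 + b2, c1 + c2 + b1 * a2 * 2 * d,
      by refine ⟨?_, ?_, ?_⟩ <;> simp [h1, h2, h3, h4, h5, h6] <;> ring⟩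
  inv_mem' := by
    rintro p ⟨a, b, c, h1, h2, h3⟩
    exact ⟨-a, -b, -c + 2 * a * b * d,
      by refine ⟨?_, ?_, ?_⟩ <;> simp [h1, h2, h3] <;> ring⟩

lemma N_normal (d : ℤ) : (N d).Normal := by
  constructor
  rintro p ⟨a, b, c, h1, h2, h3⟩ g
  exact ⟨a, b, c + g.y * a - b * g.x,
    by refine ⟨?_, ?_, ?_⟩ <;> simp [h1, h2, h3] <;> ring⟩

lemma mem_N (d : ℤ) (p : H3) (a b c : ℤ) (h1 : p.x = a * (2 * d)) (h2 : p.y = b * (2 * d))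
    (h3 : p.z = (a + b) * d + c * (2 * d)) : p ∈ N d := ⟨a, b, c, h1, h2, h3⟩

end H3

/-- A two-generator 2-group of class two of exceptional type is not capable. -/
theorem exceptional_type_not_capable (γ : ℕ) (hγ : 1 ≤ γ) :
    ¬ IsCapable (PresentedGroup (relsIII γ)) := by
  obtain ⟨δ, rfl⟩ : ∃ δ, γ = δ + 1 := ⟨γ - 1, (Nat.succ_pred_eq_of_pos hγ).symm⟩
  set d : ℤ := 2 ^ δ with hd
  have hd0 : (0:ℤ) < d := by positivity
  haveI : (H3.N d).Normal := H3.N_normal d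
  set A0 : H3 := ⟨1, 0, 0⟩ with hA0
  set B0 : H3 := ⟨0, 1, 0⟩ with hB0
  set mkQ : H3 →* H3 ⧸ H3.N d := QuotientGroup.mk' (H3.N d) with hmkQ
  set g0 : Fin 2 → H3 := ![A0, B0] with hg0
  have hg00 : g0 0 = A0 := rfl
  have hg01 : g0 1 = B0 := rfl
  have e1 : ((2:ℤ) ^ (δ + 1)) = 2 * d := by rw [hd, pow_succ]; ring
  have e2 : ((2:ℤ) ^ (δ + 2)) = 2 * (2 * d) := by rw [hd, pow_succ, pow_succ]; ring
  -- the relators are mapped into N d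
  have hlift : ∀ r ∈ relsIII (δ + 1),
      FreeGroup.lift (fun i => mkQ (g0 i)) r = 1 := by
    have hco : FreeGroup.lift (fun i => mkQ (g0 i)) = mkQ.comp (FreeGroup.lift g0) := by
      ext i
      simp
    intro r hr
    rw [hco]
    simp only [MonoidHom.comp_apply, hmkQ, QuotientGroup.mk'_apply, QuotientGroup.eq_one_iff]
    simp only [relsIII, Set.mem_insert_iff, Set.mem_singleton_iff] at hr
    rcases hr with rfl | rfl | rfl | rfl | rfl | rfl | rfl
    · rw [map_pow, FreeGroup.lift_apply_of, hg00, hA0, H3.pow_xz]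
      exact H3.mem_N d _ 2 0 (-1) (by push_cast; rw [show δ+1+1 = δ+2 from rfl, e2]; ring)
        (by simp) (by simp)
    · rw [map_pow, FreeGroup.lift_apply_of, hg01, hB0, H3.pow_yz]
      exact H3.mem_N d _ 0 2 (-1) (by simp) (by push_cast; rw [show δ+1+1 = δ+2 from rfl, e2]; ring)
        (by simp)
    · rw [map_pow, map_pcomm, FreeGroup.lift_apply_of, FreeGroup.lift_apply_of, hg00, hg01, hA0, hB0,
        H3.pcomm_ab, H3.pow_xz]
      exact H3.mem_N d _ 0 0 (-1) (by simp) (by simp) (by push_cast; rw [e1]; ring)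
    · rw [map_pcomm, map_pcomm, FreeGroup.lift_apply_of, FreeGroup.lift_apply_of, hg00, hg01, hA0, hB0,
        H3.pcomm_ab, H3.pcomm_ca]
      exact (H3.N d).one_mem
    · rw [map_pcomm, map_pcomm, FreeGroup.lift_apply_of, FreeGroup.lift_apply_of, hg00, hg01, hA0, hB0,
        H3.pcomm_ab, H3.pcomm_cb]
      exact (H3.N d).one_mem
    · rw [map_mul, map_inv, map_pow, map_pow, map_pcomm, FreeGroup.lift_apply_of, FreeGroup.lift_apply_of,
        hg00, hg01, hA0, hB0, H3.pcomm_ab, H3.pow_xz, H3.pow_xz]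
      refine H3.mem_N d _ 1 0 0 ?_ ?_ ?_
      · simp only [H3.mul_x, H3.inv_x]; push_cast; linear_combination e1
      · simp
      · simp only [H3.mul_z, H3.inv_z, H3.mul_y]; push_cast; linear_combination hd
    · rw [map_mul, map_inv, map_pow, map_pow, map_pcomm, FreeGroup.lift_apply_of, FreeGroup.lift_apply_of,
        hg00, hg01, hA0, hB0, H3.pcomm_ab, H3.pow_yz, H3.pow_xz]
      refine H3.mem_N d _ 0 1 0 ?_ ?_ ?_
      · simp
      · simp only [H3.mul_y, H3.inv_y]; push_cast; linear_combination e1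
      · simp only [H3.mul_z, H3.inv_z, H3.mul_y, H3.mul_x, H3.inv_x]; push_cast
        linear_combination hd
  -- the induced homomorphism from the presented group to the model
  set f : PresentedGroup (relsIII (δ + 1)) →* H3 ⧸ H3.N d := PresentedGroup.toGroup hlift with hf
  have hfa : f (PresentedGroup.of 0) = mkQ A0 := PresentedGroup.toGroup.of hlift
  -- a^(2^(δ+1)) is nontrivial in the presented group
  have hA1 : (PresentedGroup.of 0 : PresentedGroup (relsIII (δ + 1))) ^ 2 ^ (δ + 1) ≠ 1 := by
    intro h
    have h2 : mkQ (A0 ^ 2 ^ (δ + 1)) = 1 := by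
      rw [map_pow, ← hfa, ← map_pow, h, map_one]
    rw [hmkQ, QuotientGroup.mk'_apply, QuotientGroup.eq_one_iff] at h2
    obtain ⟨a, b, c, h1, h2, h3⟩ := h2
    rw [hA0, H3.pow_xz] at h1 h2 h3
    simp only [H3.mul_x, H3.mul_y, H3.mul_z] at h1 h2 h3
    push_cast at h1
    rw [e1] at h1
    -- h1 : 2 * d = a * (2 * d), h2 : 0 = b * (2 * d), h3 : 0 = (a + b) * d + c * (2 * d)
    have ha : a = 1 := by
      have h4 : (a - 1) * (2 * d) = 0 := by linear_combination -h1
      rcases mul_eq_zero.mp h4 with h5 | h5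
      · linarith
      · nlinarith
    have hb : b = 0 := by
      rcases mul_eq_zero.mp h2.symm with h5 | h5
      · exact h5
      · nlinarith
    rw [ha, hb] at h3
    have h6 : d * (1 + 2 * c) = 0 := by linear_combination -h3
    rcases mul_eq_zero.mp h6 with h5 | h5
    · nlinarith
    · omega
  -- now suppose the group were capable
  rintro ⟨K, instK, ⟨e⟩⟩
  set ψ : K →* PresentedGroup (relsIII (δ + 1)) :=
    e.toMonoidHom.comp (QuotientGroup.mk' (Subgroup.center K)) with hψ
  have hsurj : Function.Surjective ψ :=
    e.surjective.comp (QuotientGroup.mk'_surjective _)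
  have hker : ∀ k : K, ψ k = 1 ↔ k ∈ Subgroup.center K := by
    intro k
    rw [hψ, MonoidHom.comp_apply]
    rw [show (e.toMonoidHom : (K ⧸ Subgroup.center K) →* PresentedGroup (relsIII (δ+1)))
        ((QuotientGroup.mk' (Subgroup.center K)) k) = e ((QuotientGroup.mk' _) k) from rfl]
    rw [EmbeddingLike.map_eq_one_iff, QuotientGroup.mk'_apply, QuotientGroup.eq_one_iff]
  -- relations in the presented group
  have hmk : ∀ r ∈ relsIII (δ + 1), PresentedGroup.mk (relsIII (δ + 1)) r = 1 := by
    intro r hr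
    exact (QuotientGroup.eq_one_iff _).mpr (Subgroup.subset_normalClosure hr)
  have hmem6 : (FreeGroup.of 0 ^ 2 ^ (δ + 1) *
      (pcomm (FreeGroup.of 0) (FreeGroup.of (1 : Fin 2)) ^ 2 ^ (δ + 1 - 1))⁻¹) ∈ relsIII (δ + 1) := by
    simp [relsIII]
  have hmem7 : (FreeGroup.of 1 ^ 2 ^ (δ + 1) *
      (pcomm (FreeGroup.of 0) (FreeGroup.of (1 : Fin 2)) ^ 2 ^ (δ + 1 - 1))⁻¹) ∈ relsIII (δ + 1) := by
    simp [relsIII]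
  have h6 : (PresentedGroup.of 0 : PresentedGroup (relsIII (δ + 1))) ^ 2 ^ (δ + 1) =
      pcomm (PresentedGroup.of 0) (PresentedGroup.of 1) ^ 2 ^ (δ + 1 - 1) := by
    have := hmk _ hmem6
    rw [map_mul, map_inv, map_pow, map_pow, map_pcomm, mul_inv_eq_one] at this
    exact this
  have h7 : (PresentedGroup.of 1 : PresentedGroup (relsIII (δ + 1))) ^ 2 ^ (δ + 1) =
      pcomm (PresentedGroup.of 0) (PresentedGroup.of 1) ^ 2 ^ (δ + 1 - 1) := by
    have := hmk _ hmem7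
    rw [map_mul, map_inv, map_pow, map_pow, map_pcomm, mul_inv_eq_one] at this
    exact this
  have hab : (PresentedGroup.of 0 : PresentedGroup (relsIII (δ + 1))) ^ 2 ^ (δ + 1) =
      (PresentedGroup.of 1 : PresentedGroup (relsIII (δ + 1))) ^ 2 ^ (δ + 1) := h6.trans h7.symm
  -- lifts of the generators
  obtain ⟨x, hx⟩ := hsurj (PresentedGroup.of 0)
  obtain ⟨y, hy⟩ := hsurj (PresentedGroup.of 1)
  set w : K := x ^ 2 ^ (δ + 1) * (y ^ 2 ^ (δ + 1))⁻¹ with hw0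
  have hw : w ∈ Subgroup.center K := by
    rw [← hker, hw0, map_mul, map_inv, map_pow, map_pow, hx, hy, hab, mul_inv_cancel]
  have hxeq : x ^ 2 ^ (δ + 1) = w * y ^ 2 ^ (δ + 1) := by
    rw [hw0, inv_mul_cancel_right]
  -- the subgroup generated by x, y together with the center is everything
  have htop : Subgroup.closure ({x, y} : Set K) ⊔ Subgroup.center K = ⊤ := by
    have hmap : Subgroup.map ψ (Subgroup.closure {x, y}) = ⊤ := by
      rw [MonoidHom.map_closure]
      have himg : ψ '' {x, y} =
          {PresentedGroup.of 0, PresentedGroup.of 1} := by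
        rw [Set.image_insert_eq, Set.image_singleton, hx, hy]
      rw [himg, eq_top_iff, ← PresentedGroup.closure_range_of (relsIII (δ + 1))]
      apply Subgroup.closure_mono
      rintro _ ⟨i, rfl⟩
      fin_cases i
      · exact Set.mem_insert _ _
      · exact Set.mem_insert_of_mem _ rfl
    have hkerψ : ψ.ker = Subgroup.center K := by
      ext k
      rw [MonoidHom.mem_ker]
      exact hker k
    calc Subgroup.closure ({x, y} : Set K) ⊔ Subgroup.center K
        = Subgroup.closure ({x, y} : Set K) ⊔ ψ.ker := by rw [hkerψ]
      _ = Subgroup.comap ψ (Subgroup.map ψ (Subgroup.closure {x, y})) :=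
          (Subgroup.comap_map_eq ψ _).symm
      _ = ⊤ := by rw [hmap, Subgroup.comap_top]
  -- x^(2^(δ+1)) is central in K
  have hxc : x ^ 2 ^ (δ + 1) ∈ Subgroup.center K := by
    rw [Subgroup.mem_center_iff]
    intro g
    have hle : Subgroup.closure ({x, y} : Set K) ⊔ Subgroup.center K ≤
        Subgroup.centralizer {x ^ 2 ^ (δ + 1)} := by
      apply sup_le
      · rw [Subgroup.closure_le]
        rintro k hk
        rcases hk with rfl | rfl
        · exact Subgroup.mem_centralizer_iff.mpr (by
            rintro h' hh'
            rw [Set.mem_singleton_iff] at hh'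
            subst hh'
            exact (Commute.self_pow k _).symm.eq)
        · refine Subgroup.mem_centralizer_iff.mpr ?_
          rintro h' hh'
          rw [Set.mem_singleton_iff] at hh'
          subst hh'
          have hcw := Subgroup.mem_center_iff.mp hw
          calc x ^ 2 ^ (δ + 1) * k = w * (k ^ 2 ^ (δ + 1) * k) := by rw [hxeq, mul_assoc]
            _ = w * (k * k ^ 2 ^ (δ + 1)) := by
                rw [((Commute.refl k).pow_right _).symm.eq]
            _ = (w * k) * k ^ 2 ^ (δ + 1) := by rw [← mul_assoc]
            _ = (k * w) * k ^ 2 ^ (δ + 1) := by rw [hcw k]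
            _ = k * (x ^ 2 ^ (δ + 1)) := by rw [mul_assoc, ← hxeq]
      · exact Subgroup.center_le_centralizer _
    have hg : g ∈ Subgroup.centralizer ({x ^ 2 ^ (δ + 1)} : Set K) := by
      apply hle
      rw [htop]
      exact Subgroup.mem_top g
    exact (Subgroup.mem_centralizer_iff.mp hg _ rfl).symm
  -- hence a^(2^(δ+1)) = 1 in the presented group, a contradiction
  apply hA1
  rw [← hx, ← map_pow]
  exact (hker _).mpr hxc
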